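/- arXiv:1804.00408 — 3 statements merged into one kernel-verified Lean document; each statement's English description precedes it below -/
import Mathlib

section
/- Let A ∈ ℝ^{r×s} with columns a_j, supports I_j = supp(a_j), rows ρ_i with supports R_i, Σ = AAᵀ with rows γ_i. Define C_{j,i} = ⋃_{k ∈ R_i \ {j}} (I_j ∩ I_k) \ {i}. Fix j and i₁, i₂ with R_{i₁} ∩ R_{i₂} = {j}. Then for every k ∈ I_j \ (C_{j,i₁} ∪ C_{j,i₂}) with k ≠ i₁, i₂, we have γ_{i₂}(k)/γ_{i₁}(k) = a_j(i₂)/a_j(i₁); i.e., I_j \ (C_{j,i₁} ∪ C_{j,i₂}) ⊆ L_φ(γ_{i₁}, γ_{i₂}) with φ = a_j(i₂)/a_j(i₁). -/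
/-- With `I_j = supp(a_j)`, `R_i = supp(ρ_i)`, `Σ = AAᵀ` with rows `γ_i`, and
`C_{j,i} = ⋃_{l ∈ R_i \ {j}} (I_j ∩ I_l) \ {i}`: if `R_{i₁} ∩ R_{i₂} = {j}`, then every
`k ∈ I_j \ (C_{j,i₁} ∪ C_{j,i₂})` with `k ≠ i₁, i₂` satisfies
`γ_{i₁}(k) ≠ 0` and `γ_{i₂}(k)/γ_{i₁}(k) = a_j(i₂)/a_j(i₁)`. -/
theorem support_ratio_collinear {r s : ℕ} (A : Matrix (Fin r) (Fin s) ℝ) (i₁ i₂ : Fin r)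
    (j : Fin s)
    (I : Fin s → Set (Fin r)) (hI : ∀ l, I l = {i : Fin r | A i l ≠ 0})
    (R : Fin r → Set (Fin s)) (hR : ∀ i, R i = {l : Fin s | A i l ≠ 0})
    (C : Fin s → Fin r → Set (Fin r))
    (hC : ∀ l i, C l i = ⋃ l' ∈ R i \ {l}, (I l ∩ I l') \ {i})
    (hsingle : R i₁ ∩ R i₂ = {j}) :
    ∀ k ∈ I j \ (C j i₁ ∪ C j i₂), k ≠ i₁ → k ≠ i₂ →
      (A * A.transpose) i₁ k ≠ 0 ∧
      (A * A.transpose) i₂ k / (A * A.transpose) i₁ k = A i₂ j / A i₁ j := by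
  intro k hk hk1 hk2
  obtain ⟨hkIj, hkC⟩ := hk
  have hkj : A k j ≠ 0 := by rw [hI] at hkIj; exact hkIj
  have hj12 : j ∈ R i₁ ∩ R i₂ := by rw [hsingle]; rfl
  have hi1j : A i₁ j ≠ 0 := by have := hj12.1; rw [hR] at this; exact this
  have hi2j : A i₂ j ≠ 0 := by have := hj12.2; rw [hR] at this; exact this
  -- key: off-j terms vanish
  have key : ∀ (i : Fin r), i = i₁ ∨ i = i₂ → k ≠ i →
      ∀ l : Fin s, l ≠ j → A i l * A k l = 0 := by
    intro i hi hki l hlj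
    by_contra h
    have hil : A i l ≠ 0 := fun h0 => h (by rw [h0, zero_mul])
    have hkl : A k l ≠ 0 := fun h0 => h (by rw [h0, mul_zero])
    have hmem : k ∈ C j i := by
      rw [hC]
      exact Set.mem_biUnion (⟨by rw [hR]; exact hil, hlj⟩ : l ∈ R i \ {j})
        ⟨⟨hkIj, by rw [hI]; exact hkl⟩, hki⟩
    rcases hi with rfl | rfl
    · exact hkC (Or.inl hmem)
    · exact hkC (Or.inr hmem)
  have e1 : (A * A.transpose) i₁ k = A i₁ j * A k j := by
    rw [Matrix.mul_apply]
    rw [Finset.sum_eq_single j]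
    · rfl
    · intro l _ hlj; exact key i₁ (Or.inl rfl) hk1 l hlj
    · intro h; exact absurd (Finset.mem_univ j) h
  have e2 : (A * A.transpose) i₂ k = A i₂ j * A k j := by
    rw [Matrix.mul_apply]
    rw [Finset.sum_eq_single j]
    · rfl
    · intro l _ hlj; exact key i₂ (Or.inr rfl) hk2 l hlj
    · intro h; exact absurd (Finset.mem_univ j) h
  constructor
  · rw [e1]; exact mul_ne_zero hi1j hkj
  · rw [e1, e2, mul_div_mul_right _ _ hkj]
end

section
/- If Q ~ χ²_n (chi-squared with n degrees of freedom), then for all t > 0, P(Q ≥ n + 2√(nt) + 2t) ≤ e^{−t}; and consequently, since 2√(nt) ≤ n + t, P(Q ≥ 2n + 3t) ≤ e^{−t}. -/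
/-!
Chernoff: for `0 ≤ l < 1/2`, a standard Gaussian `X` has `E exp (l X²) = (1 - 2l)^(-1/2)`, so
`P(Q ≥ a) ≤ exp (-l a) (1 - 2l)^(-n/2)`. Writing `t = n s²`, the threshold `n + 2√(nt) + 2t` is
`n q` with `q = 1 + 2s + 2s²`, and the choice `1 - 2l = q⁻¹` gives the bound
`exp (-n (s + s²)) q^(n/2) ≤ exp (-n s²) = exp (-t)`, since `q ≤ exp (2s)`.
-/

open MeasureTheory ProbabilityTheory Real

lemma sqrt_one_add_two_mul_add_two_mul_sq_le_exp {s : ℝ} (hs : 0 ≤ s) :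
    √(1 + 2 * s + 2 * s ^ 2) ≤ exp s := by
  rw [sqrt_le_left (exp_pos s).le, ← exp_nat_mul]
  have := quadratic_le_exp_of_nonneg (mul_nonneg zero_le_two hs)
  push_cast
  linarith

namespace ProbabilityTheory

lemma gaussianPDFReal_zero_one_mul_exp_mul_sq (l x : ℝ) :
    gaussianPDFReal 0 1 x * exp (l * x ^ 2) = (√(2 * π))⁻¹ * exp (-(1 / 2 - l) * x ^ 2) := by
  rw [gaussianPDFReal, NNReal.coe_one, mul_one, mul_assoc, ← exp_add]
  congr 2
  ring

lemma integrable_exp_mul_sq_gaussianReal {l : ℝ} (hl : l < 1 / 2) :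
    Integrable (fun x ↦ exp (l * x ^ 2)) (gaussianReal 0 1) := by
  rw [gaussianReal_of_var_ne_zero _ one_ne_zero, integrable_withDensity_iff_integrable_smul'
    (measurable_gaussianPDF 0 1) (ae_of_all _ fun _ ↦ gaussianPDF_lt_top)]
  simp_rw [toReal_gaussianPDF, smul_eq_mul, gaussianPDFReal_zero_one_mul_exp_mul_sq]
  exact (integrable_exp_neg_mul_sq (by linarith)).const_mul _

/-- For `l ≥ 1/2` both sides are junk `0`: the Gaussian integral `√(π / b)` at `b ≤ 0` and `0⁻¹`. -/
lemma integral_exp_mul_sq_gaussianReal (l : ℝ) :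
    ∫ x, exp (l * x ^ 2) ∂gaussianReal 0 1 = (√(1 - 2 * l))⁻¹ := by
  simp_rw [integral_gaussianReal_eq_integral_smul one_ne_zero, smul_eq_mul,
    gaussianPDFReal_zero_one_mul_exp_mul_sq, integral_const_mul, integral_gaussian]
  have h2π : √(2 * π) ≠ 0 := by positivity
  rw [show π / (1 / 2 - l) = 2 * π / (1 - 2 * l) by field_simp, sqrt_div (by positivity),
    ← mul_div_assoc, inv_mul_cancel₀ h2π, one_div]

variable {Ω : Type*} [MeasurableSpace Ω] {μ : Measure Ω}

lemma integrable_exp_mul_sq_of_map_eq_gaussianReal {X : Ω → ℝ}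
    (hX : μ.map X = gaussianReal 0 1) {l : ℝ} (hl : l < 1 / 2) :
    Integrable (fun ω ↦ exp (l * X ω ^ 2)) μ := by
  have hXm : AEMeasurable X μ := aemeasurable_of_map_neZero (by rw [hX]; infer_instance)
  have h := integrable_exp_mul_sq_gaussianReal hl
  rwa [← hX, integrable_map_measure (by fun_prop) hXm] at h

lemma mgf_sq_of_map_eq_gaussianReal {X : Ω → ℝ} (hX : μ.map X = gaussianReal 0 1) (l : ℝ) :
    mgf (fun ω ↦ X ω ^ 2) μ l = (√(1 - 2 * l))⁻¹ := by
  have hXm : AEMeasurable X μ := aemeasurable_of_map_neZero (by rw [hX]; infer_instance)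
  rw [← integral_exp_mul_sq_gaussianReal, ← hX, integral_map hXm (by fun_prop)]
  rfl

lemma iIndepFun.integrable_exp_mul_sum₀ {ι : Type*} [IsFiniteMeasure μ] {X : ι → Ω → ℝ}
    (h_indep : iIndepFun X μ) (h_meas : ∀ i, AEMeasurable (X i) μ) {t : ℝ} {s : Finset ι}
    (h_int : ∀ i ∈ s, Integrable (fun ω ↦ exp (t * X i ω)) μ) :
    Integrable (fun ω ↦ exp (t * (∑ i ∈ s, X i) ω)) μ := by
  have hae : ∀ i, X i =ᵐ[μ] (h_meas i).mk := fun i ↦ (h_meas i).ae_eq_mk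
  refine ((h_indep.congr hae).integrable_exp_mul_sum (t := t) (fun i ↦ (h_meas i).measurable_mk)
    fun i hi ↦ (h_int i hi).congr ?_).congr ?_
  · filter_upwards [hae i] with ω hω
    rw [hω]
  · filter_upwards [(Filter.eventually_all_finset s).2 fun i _ ↦ hae i] with ω hω
    simp only [Finset.sum_apply]
    rw [Finset.sum_congr rfl hω]

theorem measureReal_sum_sq_ge_le_exp_mul {ι : Type*} [Fintype ι] {X : ι → Ω → ℝ}
    (hindep : iIndepFun X μ) (hgauss : ∀ i, μ.map (X i) = gaussianReal 0 1)
    {l : ℝ} (hl₀ : 0 ≤ l) (hl : l < 1 / 2) (a : ℝ) :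
    μ.real {ω | a ≤ ∑ i, X i ω ^ 2} ≤ exp (-l * a) * (√(1 - 2 * l))⁻¹ ^ Fintype.card ι := by
  have := hindep.isProbabilityMeasure
  have hXm : ∀ i, AEMeasurable (X i) μ := fun i ↦
    aemeasurable_of_map_neZero (by rw [hgauss i]; infer_instance)
  have hsq_indep : iIndepFun (fun i ω ↦ X i ω ^ 2) μ :=
    hindep.comp (fun _ x ↦ x ^ 2) fun _ ↦ by fun_prop
  have hsq_meas : ∀ i, AEMeasurable (fun ω ↦ X i ω ^ 2) μ := fun i ↦ (hXm i).pow_const 2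
  have h_int := hsq_indep.integrable_exp_mul_sum₀ hsq_meas (s := Finset.univ)
    fun i _ ↦ integrable_exp_mul_sq_of_map_eq_gaussianReal (hgauss i) hl
  calc μ.real {ω | a ≤ ∑ i, X i ω ^ 2}
      = μ.real {ω | a ≤ (∑ i, fun ω ↦ X i ω ^ 2) ω} := by simp only [Finset.sum_apply]
    _ ≤ exp (-l * a) * mgf (∑ i, fun ω ↦ X i ω ^ 2) μ l := measure_ge_le_exp_mul_mgf a hl₀ h_int
    _ = exp (-l * a) * (√(1 - 2 * l))⁻¹ ^ Fintype.card ι := by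
      rw [hsq_indep.mgf_sum₀ hsq_meas, Finset.prod_eq_pow_card fun i _ ↦
        mgf_sq_of_map_eq_gaussianReal (hgauss i) l, Finset.card_univ]

theorem measureReal_sum_sq_ge_le_exp_neg {ι : Type*} [Fintype ι] {X : ι → Ω → ℝ}
    (hindep : iIndepFun X μ) (hgauss : ∀ i, μ.map (X i) = gaussianReal 0 1) {t : ℝ} (ht : 0 < t) :
    μ.real {ω | (Fintype.card ι : ℝ) + 2 * √(Fintype.card ι * t) + 2 * t ≤ ∑ i, X i ω ^ 2}
      ≤ exp (-t) := by
  set n := Fintype.card ι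
  rcases Nat.eq_zero_or_pos n with hn | hn
  · have : IsEmpty ι := Fintype.card_eq_zero_iff.1 hn
    have hempty : {ω | (n : ℝ) + 2 * √(n * t) + 2 * t ≤ ∑ i, X i ω ^ 2} = ∅ := by
      ext ω
      simp [hn, ht]
    rw [hempty, measureReal_empty]
    exact (exp_pos _).le
  have hn' : (0 : ℝ) < n := Nat.cast_pos.2 hn
  set s := √(t / n)
  have hs : 0 ≤ s := sqrt_nonneg _
  have hts : n * s ^ 2 = t := by
    rw [sq_sqrt (div_nonneg ht.le hn'.le)]
    field_simp
  have hsq : √(n * t) = n * s := by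
    rw [← hts, show (n : ℝ) * (n * s ^ 2) = (n * s) ^ 2 by ring, sqrt_sq (by positivity)]
  set q := 1 + 2 * s + 2 * s ^ 2 with hq_def
  have hq : 1 ≤ q := by nlinarith
  calc μ.real {ω | (n : ℝ) + 2 * √(n * t) + 2 * t ≤ ∑ i, X i ω ^ 2}
      = μ.real {ω | n * q ≤ ∑ i, X i ω ^ 2} := by
        rw [hsq, ← hts, hq_def]
        ring_nf
    _ ≤ exp (-((1 - q⁻¹) / 2) * (n * q)) * (√(1 - 2 * ((1 - q⁻¹) / 2)))⁻¹ ^ n :=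
        measureReal_sum_sq_ge_le_exp_mul hindep hgauss (by linarith [inv_le_one_of_one_le₀ hq])
          (by linarith [inv_pos.2 (zero_lt_one.trans_le hq)]) _
    _ = exp (-(n * (s + s ^ 2))) * √q ^ n := by
        have hq0 : q ≠ 0 := by positivity
        rw [show 1 - 2 * ((1 - q⁻¹) / 2) = q⁻¹ by ring, sqrt_inv, inv_inv]
        congr 2
        field_simp
        rw [hq_def]
        ring
    _ ≤ exp (-(n * (s + s ^ 2))) * exp s ^ n := by
        gcongr
        exact sqrt_one_add_two_mul_add_two_mul_sq_le_exp hs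
    _ = exp (-t) := by
        rw [← exp_nat_mul, ← exp_add, ← hts]
        ring_nf

end ProbabilityTheory

theorem chi_squared_tail_bound_general {Ω : Type*} [MeasurableSpace Ω] (μ : Measure Ω)
    (n : ℕ) (X : Fin n → Ω → ℝ)
    (hindep : iIndepFun X μ)
    (hgauss : ∀ i, Measure.map (X i) μ = gaussianReal 0 1)
    (t : ℝ) (ht : 0 < t) :
    μ {ω | (n : ℝ) + 2 * Real.sqrt (n * t) + 2 * t ≤ ∑ i, (X i ω) ^ 2}
      ≤ ENNReal.ofReal (exp (-t)) ∧
    μ {ω | 2 * (n : ℝ) + 3 * t ≤ ∑ i, (X i ω) ^ 2} ≤ ENNReal.ofReal (exp (-t)) := by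
  have := hindep.isProbabilityMeasure
  have tail : μ {ω | (n : ℝ) + 2 * √(n * t) + 2 * t ≤ ∑ i, X i ω ^ 2}
      ≤ ENNReal.ofReal (exp (-t)) := by
    rw [← ofReal_measureReal]
    gcongr
    simpa only [Fintype.card_fin] using measureReal_sum_sq_ge_le_exp_neg hindep hgauss ht
  have amgm : 2 * √(n * t) ≤ n + t := by
    have hnt : (0 : ℝ) ≤ n * t := by positivity
    nlinarith [sq_sqrt hnt, sqrt_nonneg (n * t), sq_nonneg ((n : ℝ) - t)]
  exact ⟨tail, (measure_mono fun ω hω ↦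
    (by linarith : _ ≤ 2 * (n : ℝ) + 3 * t).trans hω).trans tail⟩

/-- Laurent–Massart tail bound for a chi-squared variable `Q ~ χ²_n` (a sum of `n`
independent squared standard Gaussians): for `t > 0`,
`P(Q ≥ n + 2√(nt) + 2t) ≤ e^{−t}` and consequently `P(Q ≥ 2n + 3t) ≤ e^{−t}`. -/
theorem chi_squared_tail_bound {Ω : Type*} [MeasurableSpace Ω] (μ : Measure Ω)
    [IsProbabilityMeasure μ] (n : ℕ) (X : Fin n → Ω → ℝ)
    (hindep : iIndepFun X μ)
    (hgauss : ∀ i, Measure.map (X i) μ = gaussianReal 0 1)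
    (t : ℝ) (ht : 0 < t) :
    μ {ω | (n : ℝ) + 2 * Real.sqrt (n * t) + 2 * t ≤ ∑ i, (X i ω) ^ 2}
      ≤ ENNReal.ofReal (exp (-t)) ∧
    μ {ω | 2 * (n : ℝ) + 3 * t ≤ ∑ i, (X i ω) ^ 2} ≤ ENNReal.ofReal (exp (-t)) :=
  chi_squared_tail_bound_general μ n X hindep hgauss t ht
end

section
/- Row-norm bound for Bernoulli–Gaussian matrices: let A ∈ ℝ^{r×s} have i.i.d. entries A_{ij} = B_{ij}·ξ_{ij} where B_{ij} ~ Ber(θ) and ξ_{ij} ~ N(0,1) are mutually independent. Then P(|AAᵀ|_∞ > 5sθ) ≤ r·e^{−sθ/6}, where |AAᵀ|_∞ = maxᵢ ‖ρᵢ‖₂² and ρᵢ is the i-th row of A. -/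
/-!
A Chernoff bound at `λ = 1/3` replaces the paper's conditioning on the row support. For an
entry `A = b ξ`, `E exp(A²/3) = 1 - θ + θ E exp(ξ²/3) = 1 - θ + θ √3 ≤ exp(3θ/4)`, so by
independence a row satisfies `E exp(‖ρᵢ‖²/3) ≤ exp(3sθ/4)`, and Markov's inequality gives
`P(‖ρᵢ‖² > 5sθ) ≤ exp(3sθ/4 - 5sθ/3) ≤ exp(-sθ/6)`. A union bound over the `r` rows finishes.
-/

open MeasureTheory ProbabilityTheory Real
open scoped ENNReal

lemma lintegral_fun_prod_eq_prod_lintegral_of_iIndepFun {Ω ι : Type*} [MeasurableSpace Ω]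
    {μ : Measure Ω} [Fintype ι] {X : ι → Ω → ℝ≥0∞} (hX : iIndepFun X μ)
    (hXm : ∀ i, AEMeasurable (X i) μ) :
    ∫⁻ ω, ∏ i, X i ω ∂μ = ∏ i, ∫⁻ ω, X i ω ∂μ := by
  set Y : ι → Ω → ℝ≥0∞ := fun i => (hXm i).mk (X i)
  have hXY : ∀ i, X i =ᵐ[μ] Y i := fun i => (hXm i).ae_eq_mk
  calc ∫⁻ ω, ∏ i, X i ω ∂μ = ∫⁻ ω, ∏ i, Y i ω ∂μ := by
        refine lintegral_congr_ae ?_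
        filter_upwards [ae_all_iff.2 hXY] with ω hω
        exact Finset.prod_congr rfl fun i _ => hω i
    _ = ∏ i, ∫⁻ ω, Y i ω ∂μ := lintegral_prod_eq_prod_lintegral_of_indepFun _ _
        (hX.congr hXY) fun i => (hXm i).measurable_mk
    _ = ∏ i, ∫⁻ ω, X i ω ∂μ :=
        Finset.prod_congr rfl fun i _ => lintegral_congr_ae (hXY i).symm

lemma measure_lt_le_exp_mul_lintegral_exp {Ω : Type*} [MeasurableSpace Ω] {μ : Measure Ω}
    {X : Ω → ℝ} (hX : AEMeasurable X μ) (a : ℝ) {t : ℝ} (ht : 0 < t) :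
    μ {ω | a < X ω} ≤
      ENNReal.ofReal (exp (-(t * a))) * ∫⁻ ω, ENNReal.ofReal (exp (t * X ω)) ∂μ := by
  have hsub : {ω | a < X ω} ⊆
      {ω | ENNReal.ofReal (exp (t * a)) ≤ ENNReal.ofReal (exp (t * X ω))} :=
    fun ω hω => ENNReal.ofReal_le_ofReal (exp_le_exp.2 (by gcongr; exact le_of_lt hω))
  refine (measure_mono hsub).trans ((meas_ge_le_lintegral_div (by fun_prop)
    (by simp [exp_pos]) ENNReal.ofReal_ne_top).trans_eq ?_)
  rw [ENNReal.div_eq_inv_mul, ← ENNReal.ofReal_inv_of_pos (exp_pos _), exp_neg]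

-- `0 ≤ a` covers the empty index type, where the real `⨆` is `0`.
lemma setOf_lt_iSup_subset_iUnion {Ω ι : Type*} [Finite ι] (f : ι → Ω → ℝ) {a : ℝ}
    (ha : 0 ≤ a) : {ω | a < ⨆ i, f i ω} ⊆ ⋃ i, {ω | a < f i ω} := by
  intro ω (hω : a < ⨆ i, f i ω)
  rcases isEmpty_or_nonempty ι with hι | hι
  · rw [iSup_of_isEmpty] at hω
    linarith
  · obtain ⟨i, hi⟩ := exists_lt_of_lt_ciSup hω
    exact Set.mem_iUnion.2 ⟨i, hi⟩

lemma lintegral_exp_mul_sq_gaussianReal {t : ℝ} (ht : t < 1 / 2) :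
    ∫⁻ x, ENNReal.ofReal (exp (t * x ^ 2)) ∂gaussianReal 0 1 =
      ENNReal.ofReal (√(1 - 2 * t))⁻¹ := by
  have hdens (x : ℝ) : gaussianPDF 0 1 x * ENNReal.ofReal (exp (t * x ^ 2)) =
      ENNReal.ofReal ((√(2 * π))⁻¹ * exp (-(1 / 2 - t) * x ^ 2)) := by
    rw [gaussianPDF, ← ENNReal.ofReal_mul (gaussianPDFReal_nonneg 0 1 x), gaussianPDFReal]
    congr 1
    push_cast
    rw [mul_one, mul_assoc, ← exp_add]
    ring_nf
  rw [gaussianReal_of_var_ne_zero 0 one_ne_zero,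
    lintegral_withDensity_eq_lintegral_mul _ (measurable_gaussianPDF 0 1) (by fun_prop)]
  simp only [Pi.mul_apply, hdens]
  rw [← ofReal_integral_eq_lintegral_ofReal
      ((integrable_exp_neg_mul_sq (by linarith)).const_mul _) (.of_forall fun x => by positivity),
    integral_const_mul, integral_gaussian]
  have h2π : 0 < √(2 * π) := sqrt_pos.2 (by positivity)
  have h12t : 0 < √(1 - 2 * t) := sqrt_pos.2 (by linarith)
  rw [show π / (1 / 2 - t) = 2 * π / (1 - 2 * t) by field_simp, sqrt_div' _ (by linarith)]
  field_simp

lemma lintegral_comp_mul_twoPoint_prod {ν : Measure ℝ} [IsProbabilityMeasure ν]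
    {F : ℝ → ℝ≥0∞} (hF : Measurable F) (a b : ℝ≥0∞) :
    ∫⁻ p : ℝ × ℝ, F (p.1 * p.2) ∂(a • Measure.dirac (1 : ℝ) + b • Measure.dirac 0).prod ν =
      a * ∫⁻ x, F x ∂ν + b * F 0 := by
  rw [Measure.add_prod, Measure.prod_smul_left, Measure.prod_smul_left, Measure.dirac_prod,
    Measure.dirac_prod, lintegral_add_measure, lintegral_smul_measure, lintegral_smul_measure,
    lintegral_map (by fun_prop) (by fun_prop), lintegral_map (by fun_prop) (by fun_prop)]
  simp

lemma aemeasurable_of_map_eq_twoPoint {Ω : Type*} [MeasurableSpace Ω] {μ : Measure Ω}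
    {b : Ω → ℝ} {θ : ℝ} (hber : μ.map b =
      ENNReal.ofReal θ • Measure.dirac (1 : ℝ) + ENNReal.ofReal (1 - θ) • Measure.dirac 0) :
    AEMeasurable b μ := by
  refine .of_map_ne_zero fun h => ?_
  have hmass := congrArg (· Set.univ) (hber.symm.trans h)
  simp only [Measure.coe_add, Measure.coe_smul, Pi.add_apply, Pi.smul_apply, measure_univ,
    smul_eq_mul, mul_one, Measure.coe_zero, Pi.zero_apply, add_eq_zero,
    ENNReal.ofReal_eq_zero] at hmass
  linarith [hmass.1, hmass.2]

lemma lintegral_exp_mul_sq_mul_of_bernoulli_of_gaussian {Ω : Type*} [MeasurableSpace Ω]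
    {μ : Measure Ω} [IsFiniteMeasure μ] {θ t : ℝ} (hθ0 : 0 ≤ θ) (hθ1 : θ ≤ 1) (ht : t < 1 / 2)
    {b ξ : Ω → ℝ} (hbξ : IndepFun b ξ μ)
    (hber : μ.map b =
      ENNReal.ofReal θ • Measure.dirac (1 : ℝ) + ENNReal.ofReal (1 - θ) • Measure.dirac 0)
    (hgauss : μ.map ξ = gaussianReal 0 1) :
    ∫⁻ ω, ENNReal.ofReal (exp (t * (b ω * ξ ω) ^ 2)) ∂μ =
      ENNReal.ofReal (1 - θ + θ * (√(1 - 2 * t))⁻¹) := by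
  have hb : AEMeasurable b μ := aemeasurable_of_map_eq_twoPoint hber
  have hξ : AEMeasurable ξ μ := .of_map_ne_zero (hgauss ▸ IsProbabilityMeasure.ne_zero _)
  have hF : Measurable fun p : ℝ × ℝ => ENNReal.ofReal (exp (t * (p.1 * p.2) ^ 2)) := by
    fun_prop
  rw [← lintegral_map' hF.aemeasurable (hb.prodMk hξ),
    (indepFun_iff_map_prod_eq_prod_map_map hb hξ).1 hbξ, hber, hgauss,
    lintegral_comp_mul_twoPoint_prod (F := fun x => ENNReal.ofReal (exp (t * x ^ 2)))
      (by fun_prop), lintegral_exp_mul_sq_gaussianReal ht,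
    ← ENNReal.ofReal_mul hθ0]
  simp only [ne_eq, OfNat.ofNat_ne_zero, not_false_eq_true, zero_pow, mul_zero, exp_zero,
    ENNReal.ofReal_one, mul_one]
  rw [add_comm, ← ENNReal.ofReal_add (by linarith) (by positivity)]

lemma exp_neg_mul_mul_one_add_mul_pow_le {θ : ℝ} (hθ : 0 ≤ θ) (s : ℕ) :
    exp (-(3⁻¹ * (5 * s * θ))) * (1 - θ + θ * √3) ^ s ≤ exp (-(s * θ) / 6) := by
  have hsqrt3 : √3 ≤ 7 / 4 := by
    rw [sqrt_le_left (by norm_num)]; norm_num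
  have hbase_le : 1 - θ + θ * √3 ≤ exp (3 / 4 * θ) := by
    nlinarith [add_one_le_exp (3 / 4 * θ)]
  calc exp (-(3⁻¹ * (5 * s * θ))) * (1 - θ + θ * √3) ^ s
      ≤ exp (-(3⁻¹ * (5 * s * θ))) * exp (3 / 4 * θ) ^ s := by
        gcongr
        nlinarith [sqrt_nonneg 3, one_le_sqrt.2 (by norm_num : (1 : ℝ) ≤ 3)]
    _ = exp (-(11 / 12) * (s * θ)) := by rw [← exp_nat_mul, ← exp_add]; ring_nf
    _ ≤ exp (-(s * θ) / 6) := exp_le_exp.2 (by nlinarith [mul_nonneg s.cast_nonneg hθ])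

lemma measure_sum_sq_mul_gt_le_of_bernoulli_of_gaussian {Ω : Type*} [MeasurableSpace Ω]
    {μ : Measure Ω} [IsProbabilityMeasure μ] {s : ℕ} {θ : ℝ} (hθ0 : 0 ≤ θ) (hθ1 : θ ≤ 1)
    {B ξ : Fin s → Ω → ℝ} (hindep : iIndepFun (fun j ω => (B j ω, ξ j ω)) μ)
    (hpair : ∀ j, IndepFun (B j) (ξ j) μ)
    (hber : ∀ j, μ.map (B j) =
      ENNReal.ofReal θ • Measure.dirac (1 : ℝ) + ENNReal.ofReal (1 - θ) • Measure.dirac 0)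
    (hgauss : ∀ j, μ.map (ξ j) = gaussianReal 0 1) :
    μ {ω | 5 * s * θ < ∑ j, (B j ω * ξ j ω) ^ 2} ≤ ENNReal.ofReal (exp (-(s * θ) / 6)) := by
  have hB j : AEMeasurable (B j) μ := aemeasurable_of_map_eq_twoPoint (hber j)
  have hξ j : AEMeasurable (ξ j) μ :=
    .of_map_ne_zero ((hgauss j) ▸ IsProbabilityMeasure.ne_zero _)
  set g : ℝ × ℝ → ℝ≥0∞ := fun q => ENNReal.ofReal (exp (3⁻¹ * (q.1 * q.2) ^ 2))
  have hg : Measurable g := by fun_prop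
  have hsqrt : (√(1 - 2 * 3⁻¹ : ℝ))⁻¹ = √3 := by
    rw [← sqrt_inv]; norm_num
  have hentry j : ∫⁻ ω, g (B j ω, ξ j ω) ∂μ = ENNReal.ofReal (1 - θ + θ * √3) := by
    rw [← hsqrt]
    exact lintegral_exp_mul_sq_mul_of_bernoulli_of_gaussian hθ0 hθ1 (by norm_num)
      (hpair j) (hber j) (hgauss j)
  have hmgf : ∫⁻ ω, ENNReal.ofReal (exp (3⁻¹ * ∑ j, (B j ω * ξ j ω) ^ 2)) ∂μ =
      ENNReal.ofReal (1 - θ + θ * √3) ^ s := by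
    calc ∫⁻ ω, ENNReal.ofReal (exp (3⁻¹ * ∑ j, (B j ω * ξ j ω) ^ 2)) ∂μ
        = ∫⁻ ω, ∏ j, g (B j ω, ξ j ω) ∂μ := by
          simp only [g, Finset.mul_sum, exp_sum,
            ENNReal.ofReal_prod_of_nonneg fun j _ => (exp_pos _).le]
      _ = ∏ j, ∫⁻ ω, g (B j ω, ξ j ω) ∂μ :=
          lintegral_fun_prod_eq_prod_lintegral_of_iIndepFun (hindep.comp (fun _ => g) fun _ => hg)
            fun j => hg.comp_aemeasurable ((hB j).prodMk (hξ j))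
      _ = ENNReal.ofReal (1 - θ + θ * √3) ^ s := by
          simp only [hentry, Finset.prod_const, Finset.card_univ, Fintype.card_fin]
  have hbase_nonneg : 0 ≤ 1 - θ + θ * √3 := by
    nlinarith [one_le_sqrt.2 (by norm_num : (1 : ℝ) ≤ 3)]
  have hsum : AEMeasurable (fun ω => ∑ j, (B j ω * ξ j ω) ^ 2) μ := by fun_prop
  calc μ {ω | 5 * s * θ < ∑ j, (B j ω * ξ j ω) ^ 2}
      ≤ ENNReal.ofReal (exp (-(3⁻¹ * (5 * s * θ)))) * ENNReal.ofReal (1 - θ + θ * √3) ^ s :=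
        hmgf ▸ measure_lt_le_exp_mul_lintegral_exp hsum _ (by norm_num)
    _ = ENNReal.ofReal (exp (-(3⁻¹ * (5 * s * θ))) * (1 - θ + θ * √3) ^ s) := by
        rw [ENNReal.ofReal_mul (exp_pos _).le, ENNReal.ofReal_pow hbase_nonneg]
    _ ≤ ENNReal.ofReal (exp (-(s * θ) / 6)) :=
        ENNReal.ofReal_le_ofReal (exp_neg_mul_mul_one_add_mul_pow_le hθ0 s)

theorem bernoulli_gaussian_row_norm_bound_general {Ω : Type*} [MeasurableSpace Ω]
    (μ : Measure Ω) [IsProbabilityMeasure μ] (r s : ℕ)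
    (θ : ℝ) (hθ0 : 0 ≤ θ) (hθ1 : θ ≤ 1)
    (B ξ : Fin r → Fin s → Ω → ℝ)
    (hindep : iIndepFun
      (fun (p : Fin r × Fin s) ω => (B p.1 p.2 ω, ξ p.1 p.2 ω)) μ)
    (hpair : ∀ i j, IndepFun (B i j) (ξ i j) μ)
    (hber : ∀ i j, Measure.map (B i j) μ =
      ENNReal.ofReal θ • Measure.dirac (1 : ℝ) + ENNReal.ofReal (1 - θ) • Measure.dirac 0)
    (hgauss : ∀ i j, Measure.map (ξ i j) μ = gaussianReal 0 1) :
    μ {ω | 5 * s * θ < ⨆ i : Fin r, ∑ j, (B i j ω * ξ i j ω) ^ 2}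
      ≤ ENNReal.ofReal (r * exp (-(s * θ) / 6)) := by
  have hrow i : μ {ω | 5 * s * θ < ∑ j, (B i j ω * ξ i j ω) ^ 2} ≤
      ENNReal.ofReal (exp (-(s * θ) / 6)) :=
    measure_sum_sq_mul_gt_le_of_bernoulli_of_gaussian hθ0 hθ1
      (hindep.precomp (Prod.mk_right_injective i)) (hpair i) (hber i) (hgauss i)
  calc μ {ω | 5 * s * θ < ⨆ i : Fin r, ∑ j, (B i j ω * ξ i j ω) ^ 2}
      ≤ ∑ i, μ {ω | 5 * s * θ < ∑ j, (B i j ω * ξ i j ω) ^ 2} :=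
        (measure_mono (setOf_lt_iSup_subset_iUnion _ (by positivity))).trans
          (measure_iUnion_fintype_le _ _)
    _ ≤ ∑ _i : Fin r, ENNReal.ofReal (exp (-(s * θ) / 6)) :=
        Finset.sum_le_sum fun i _ => hrow i
    _ = ENNReal.ofReal (r * exp (-(s * θ) / 6)) := by
        rw [Finset.sum_const, Finset.card_univ, Fintype.card_fin, nsmul_eq_mul,
          ENNReal.ofReal_mul (by positivity), ENNReal.ofReal_natCast]

/-- Row-norm bound for Bernoulli–Gaussian matrices: if `A_{ij} = B_{ij} ξ_{ij}` with
mutually independent `B_{ij} ~ Ber(θ)` and `ξ_{ij} ~ N(0,1)`, then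
`P(|AAᵀ|_∞ > 5 s θ) ≤ r e^{−sθ/6}`, where `|AAᵀ|_∞ = maxᵢ ‖ρᵢ‖₂²`. -/
theorem bernoulli_gaussian_row_norm_bound {Ω : Type*} [MeasurableSpace Ω]
    (μ : Measure Ω) [IsProbabilityMeasure μ] (r s : ℕ) (hr : 0 < r) (hs : 0 < s)
    (θ : ℝ) (hθ0 : 0 ≤ θ) (hθ1 : θ ≤ 1)
    (B ξ : Fin r → Fin s → Ω → ℝ)
    (hindep : iIndepFun
      (fun (p : Fin r × Fin s) ω => (B p.1 p.2 ω, ξ p.1 p.2 ω)) μ)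
    (hpair : ∀ i j, IndepFun (B i j) (ξ i j) μ)
    (hber : ∀ i j, Measure.map (B i j) μ =
      ENNReal.ofReal θ • Measure.dirac (1 : ℝ) + ENNReal.ofReal (1 - θ) • Measure.dirac 0)
    (hgauss : ∀ i j, Measure.map (ξ i j) μ = gaussianReal 0 1) :
    μ {ω | 5 * s * θ < ⨆ i : Fin r, ∑ j, (B i j ω * ξ i j ω) ^ 2}
      ≤ ENNReal.ofReal (r * exp (-(s * θ) / 6)) :=
  bernoulli_gaussian_row_norm_bound_general μ r s θ hθ0 hθ1 B ξ hindep hpair hber hgauss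
end
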